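/- Let Σ = {a, b, c} and suppose w = xαβyβα and w' = xβαyαβ for some distinct letters α, β ∈ Σ and words x, y ∈ Σ*. Then |[w]|_u = |[w']|_u for every slender Parikh word u over Σ of length at most 2 (i.e., for every u that is a single letter or a two-letter word with distinct letters). -/

import Mathlib

/-- The number of occurrences of `v` as a scattered subword (subsequence) of `w`:
the number of strictly increasing sequences of positions in `w` spelling out `v`. -/
def subwordCount {α : Type*} [DecidableEq α] (w v : List α) : ℕ :=
  w.sublists.count v

/-- The conjugacy class (circular word) `[w]` of `w`: the set of all cyclic shifts of `w`. -/
def conjClass {α : Type*} [DecidableEq α] (w : List α) : Finset (List α) :=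
  insert w ((Finset.range w.length).image w.rotate)

/-- The average subword count of `v` in the circular word `[w]`:
`|[w]|_v = (1/|[w]|) ∑_{u ∈ [w]} |u|_v`. -/
def circCount {α : Type*} [DecidableEq α] (w v : List α) : ℚ :=
  (∑ u ∈ conjClass w, (subwordCount u v : ℚ)) / ((conjClass w).card : ℚ)

/-- The Parikh matrix of the letter `q` of the ordered alphabet `Fin s`:
the identity matrix with an extra `1` in entry `(q, q+1)`. -/
def parikhLetter {s : ℕ} (q : Fin s) : Matrix (Fin (s + 1)) (Fin (s + 1)) ℚ :=
  1 + Matrix.single q.castSucc q.succ 1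

/-- The Parikh matrix mapping over the ordered alphabet `Fin s` (a monoid morphism). -/
def parikhMatrix {s : ℕ} (w : List (Fin s)) : Matrix (Fin (s + 1)) (Fin (s + 1)) ℚ :=
  (w.map parikhLetter).prod

/-- The Parikh matrix of the circular word `[w]`:
`Ψ([w]) = (1/|[w]|) ∑_{u ∈ [w]} Ψ(u)`. -/
def circParikh {s : ℕ} (w : List (Fin s)) : Matrix (Fin (s + 1)) (Fin (s + 1)) ℚ :=
  (((conjClass w).card : ℚ))⁻¹ • ∑ u ∈ conjClass w, parikhMatrix u

/-- The alternate matrix: `(i,j)` entry is `(-1)^(i+j)` times the `(i,j)` entry of `A`. -/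
def altMatrix {n : ℕ} (A : Matrix (Fin n) (Fin n) ℚ) : Matrix (Fin n) (Fin n) ℚ :=
  Matrix.of fun i j => (-1 : ℚ) ^ (i.val + j.val) * A i j

/-- The word `a_i a_{i+1} ⋯ a_j` over the ordered alphabet `Fin s`. -/
def segWord {s : ℕ} (i j : Fin s) : List (Fin s) :=
  (List.range (j.val - i.val + 1)).attach.map fun t =>
    ⟨i.val + t.1, by
      have ht := List.mem_range.mp t.2
      have hi := i.isLt
      have hj := j.isLt
      omega⟩

/-!
Let `R(w, u) = ∑_{i < |w|} |w_i|_u` be the sum of the subword counts over all shifts of `w`.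
Shifting permutes `[w]` and leaves `R` unchanged, so double counting pairs (conjugate, shift)
gives `|[w]| · R(w, u) = |w| · ∑_{v ∈ [w]} |v|_u`, i.e. `|[w]|_u = R(w, u) / |w|`.

For `|u| ≤ 1` the count `|v|_u` depends only on the Parikh vector of `v`, which `w` and `w'`
share. For `u = γδ`, compare `R(zαβ, u)` with `R(zβα, u)`: every shift but one keeps the final
pair adjacent, and swapping an adjacent pair changes `|·|_γδ` by a constant; the remaining
shift compares `βzα` with `αzβ`, whose difference depends only on letter counts of `z`. Hence
`R(zαβ, u) - R(zβα, u)` depends only on the Parikh vector of `z`. Now `w` is a shift of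
`z₁αβ` and `w' = z₂αβ` with `z₁ = yβαx`, `z₂ = xβαy`, while `z₁βα` and `z₂βα` are shifts of
each other.
-/

open List

theorem List.cyclicPermutations_eq_map_rotate {α : Type*} {l : List α} (hl : l ≠ []) :
    l.cyclicPermutations = (range l.length).map l.rotate :=
  ext_getElem (by simp [length_cyclicPermutations_of_ne_nil l hl]) fun _ _ _ => by simp

variable {A : Type*} [DecidableEq A]

theorem subwordCount_eq_count_sublists' (w v : List A) :
    subwordCount w v = w.sublists'.count v :=
  (sublists_perm_sublists' w).count_eq v

theorem subwordCount_nil_right (w : List A) : subwordCount w [] = 1 := by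
  induction w with
  | nil => rfl
  | cons a l ih =>
    rw [subwordCount_eq_count_sublists', sublists'_cons, count_append,
      ← subwordCount_eq_count_sublists', ih, count_eq_zero.mpr (by simp)]

theorem subwordCount_cons_cons (a b : A) (l t : List A) :
    subwordCount (a :: l) (b :: t) =
      subwordCount l (b :: t) + if b = a then subwordCount l t else 0 := by
  simp only [subwordCount_eq_count_sublists', sublists'_cons, count_append]
  split_ifs with h
  · rw [h, count_map_of_injective _ _ cons_injective]
  · exact congrArg _ (count_eq_zero.mpr (by simp [Ne.symm h]))

theorem subwordCount_singleton (w : List A) (γ : A) : subwordCount w [γ] = w.count γ := by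
  induction w with
  | nil => rfl
  | cons a l ih =>
    rw [subwordCount_cons_cons, ih, subwordCount_nil_right, count_cons]
    by_cases h : γ = a
    · simp [h]
    · simp [h, Ne.symm h]

theorem subwordCount_append_pair (u v : List A) (γ δ : A) :
    subwordCount (u ++ v) [γ, δ] =
      subwordCount u [γ, δ] + subwordCount v [γ, δ] + u.count γ * v.count δ := by
  induction u with
  | nil => simp [subwordCount]
  | cons a l ih =>
    rw [cons_append, subwordCount_cons_cons, subwordCount_cons_cons, ih, subwordCount_singleton,
      subwordCount_singleton, count_cons, count_append]
    by_cases h : γ = a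
    · simp only [h, if_true, beq_self_eq_true]
      ring
    · simp [h, Ne.symm h]

theorem subwordCount_perm_of_length_le_one {l₁ l₂ u : List A} (h : l₁ ~ l₂) (hu : u.length ≤ 1) :
    subwordCount l₁ u = subwordCount l₂ u := by
  match u, hu with
  | [], _ => rw [subwordCount_nil_right, subwordCount_nil_right]
  | [γ], _ => rw [subwordCount_singleton, subwordCount_singleton, h.count_eq]

theorem subwordCount_swap_adjacent_sub (s t : List A) (a b γ δ : A) :
    (subwordCount (s ++ [a, b] ++ t) [γ, δ] : ℤ) - subwordCount (s ++ [b, a] ++ t) [γ, δ] =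
      subwordCount [a, b] [γ, δ] - subwordCount [b, a] [γ, δ] := by
  simp only [subwordCount_append_pair, count_append, (Perm.swap a b []).count_eq]
  push_cast
  ring

def rotationSum (w u : List A) : ℕ :=
  ∑ i ∈ Finset.range w.length, subwordCount (w.rotate i) u

theorem rotationSum_eq_sum_cyclicPermutations {w : List A} (hw : w ≠ []) (u : List A) :
    rotationSum w u = (w.cyclicPermutations.map (subwordCount · u)).sum := by
  rw [cyclicPermutations_eq_map_rotate hw, map_map, rotationSum, Finset.sum_eq_multiset_sum,
    Finset.range_val, Multiset.range, Multiset.map_coe, Multiset.sum_coe]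
  rfl

theorem rotationSum_of_isRotated {w w' : List A} (h : w ~r w') (u : List A) :
    rotationSum w u = rotationSum w' u := by
  rcases eq_or_ne w [] with rfl | hw
  · rw [← isRotated_nil_iff'.mp h]
  rw [rotationSum_eq_sum_cyclicPermutations hw,
    rotationSum_eq_sum_cyclicPermutations fun h' => hw (isRotated_nil_iff.mp (h' ▸ h)),
    (h.cyclicPermutations.perm.map _).sum_eq]

theorem mem_conjClass {w v : List A} : v ∈ conjClass w ↔ w ~r v := by
  simp only [conjClass, Finset.mem_insert, Finset.mem_image, Finset.mem_range, isRotated_iff_mod]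
  constructor
  · rintro (rfl | ⟨k, hk, rfl⟩)
    exacts [⟨0, by simp⟩, ⟨k, hk.le, rfl⟩]
  · rintro ⟨k, hk, rfl⟩
    rcases hk.lt_or_eq with hk | rfl
    exacts [Or.inr ⟨k, hk, rfl⟩, Or.inl (rotate_length w)]

theorem sum_conjClass_rotate {M : Type*} [AddCommMonoid M] (w : List A) (f : List A → M) (i : ℕ) :
    ∑ v ∈ conjClass w, f (v.rotate i) = ∑ v ∈ conjClass w, f v := by
  have himage : (conjClass w).image (rotate · i) = conjClass w :=
    Finset.eq_of_subset_of_card_le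
      (fun _ h => by
        obtain ⟨v, hv, rfl⟩ := Finset.mem_image.mp h
        exact mem_conjClass.mpr ((mem_conjClass.mp hv).trans (IsRotated.forall v i).symm))
      (Finset.card_image_of_injective _ (rotate_injective i)).ge
  conv_rhs => rw [← himage]
  rw [Finset.sum_image fun _ _ _ _ h => rotate_injective i h]

theorem card_conjClass_mul_rotationSum (w u : List A) :
    (conjClass w).card * rotationSum w u = w.length * ∑ v ∈ conjClass w, subwordCount v u := by
  calc (conjClass w).card * rotationSum w u
      = ∑ v ∈ conjClass w, rotationSum v u := by
        rw [Finset.sum_congr rfl fun v hv =>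
          (rotationSum_of_isRotated (mem_conjClass.mp hv) u).symm, Finset.sum_const, smul_eq_mul]
    _ = ∑ i ∈ Finset.range w.length, ∑ v ∈ conjClass w, subwordCount (v.rotate i) u := by
        rw [Finset.sum_comm]
        refine Finset.sum_congr rfl fun v hv => ?_
        rw [rotationSum, (mem_conjClass.mp hv).perm.length_eq]
    _ = w.length * ∑ v ∈ conjClass w, subwordCount v u := by
        simp [sum_conjClass_rotate w (subwordCount · u)]

theorem circCount_eq_rotationSum_div {w : List A} (hw : w ≠ []) (u : List A) :
    circCount w u = rotationSum w u / w.length := by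
  have hcard : ((conjClass w).card : ℚ) ≠ 0 := by
    exact_mod_cast (Finset.card_pos.mpr ⟨w, mem_conjClass.mpr (IsRotated.refl w)⟩).ne'
  have hlen : (w.length : ℚ) ≠ 0 := by exact_mod_cast (length_pos_iff.mpr hw).ne'
  rw [circCount, div_eq_div_iff hcard hlen, mul_comm, mul_comm (rotationSum w u : ℚ)]
  exact_mod_cast (card_conjClass_mul_rotationSum w u).symm

theorem rotationSum_perm_of_length_le_one {w w' u : List A} (h : w ~ w') (hu : u.length ≤ 1) :
    rotationSum w u = rotationSum w' u := by
  rw [rotationSum, rotationSum, h.length_eq]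
  exact Finset.sum_congr rfl fun i _ =>
    subwordCount_perm_of_length_le_one
      ((rotate_perm w i).trans (h.trans (rotate_perm w' i).symm)) hu

theorem rotationSum_append_pair (z : List A) (a b : A) (u : List A) :
    rotationSum (z ++ [a, b]) u =
      ∑ i ∈ Finset.range (z.length + 1), subwordCount (z.drop i ++ [a, b] ++ z.take i) u
        + subwordCount ([b] ++ z ++ [a]) u := by
  have hlast : (z ++ [a, b]).rotate (z.length + 1) = [b] ++ z ++ [a] := by
    rw [show z ++ [a, b] = (z ++ [a]) ++ [b] by simp,
      rotate_eq_drop_append_take (by simp), drop_left' (by simp), take_left' (by simp),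
      append_assoc]
  rw [rotationSum, show (z ++ [a, b]).length = z.length + 1 + 1 by simp, Finset.sum_range_succ,
    hlast]
  congr 1
  refine Finset.sum_congr rfl fun i hi => ?_
  have hi : i ≤ z.length := Nat.lt_succ_iff.mp (Finset.mem_range.mp hi)
  rw [rotate_eq_drop_append_take (by simp; omega), drop_append_of_le_length hi,
    take_append_of_le_length hi]

theorem rotationSum_append_pair_sub (z : List A) (a b γ δ : A) :
    (rotationSum (z ++ [a, b]) [γ, δ] : ℤ) - rotationSum (z ++ [b, a]) [γ, δ] =
      (z.length + 1) * ((subwordCount [a, b] [γ, δ] : ℤ) - subwordCount [b, a] [γ, δ])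
        + ((subwordCount ([b] ++ z ++ [a]) [γ, δ] : ℤ)
          - subwordCount ([a] ++ z ++ [b]) [γ, δ]) := by
  rw [rotationSum_append_pair, rotationSum_append_pair]
  push_cast
  rw [add_sub_add_comm, ← Finset.sum_sub_distrib,
    Finset.sum_congr rfl fun i _ => subwordCount_swap_adjacent_sub _ _ a b γ δ]
  simp [mul_sub]

theorem subwordCount_enclose_sub_eq_of_perm {z₁ z₂ : List A} (h : z₁ ~ z₂) (a b γ δ : A) :
    (subwordCount ([b] ++ z₁ ++ [a]) [γ, δ] : ℤ) - subwordCount ([a] ++ z₁ ++ [b]) [γ, δ] =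
      (subwordCount ([b] ++ z₂ ++ [a]) [γ, δ] : ℤ) - subwordCount ([a] ++ z₂ ++ [b]) [γ, δ] := by
  simp only [subwordCount_append_pair, count_append, h.count_eq]
  push_cast
  ring

theorem rotationSum_swap_pairs (x y : List A) (a b : A) {u : List A} (hu : u.length ≤ 2) :
    rotationSum (x ++ [a, b] ++ y ++ [b, a]) u = rotationSum (x ++ [b, a] ++ y ++ [a, b]) u := by
  match u, hu with
  | [], _ | [_], _ =>
    exact rotationSum_perm_of_length_le_one
      ((((Perm.swap a b []).symm.append_left x).append_right y).append (Perm.swap a b [])) (by simp)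
  | [γ, δ], _ =>
    have hz : y ++ [b, a] ++ x ~ x ++ [b, a] ++ y :=
      perm_iff_count.mpr fun c => by simp only [count_append]; omega
    have h₁ : rotationSum (x ++ [a, b] ++ y ++ [b, a]) [γ, δ] =
        rotationSum (y ++ [b, a] ++ x ++ [a, b]) [γ, δ] :=
      rotationSum_of_isRotated
        (by simpa using isRotated_append (l := x ++ [a, b]) (l' := y ++ [b, a])) _
    have h₂ : rotationSum (y ++ [b, a] ++ x ++ [b, a]) [γ, δ] =
        rotationSum (x ++ [b, a] ++ y ++ [b, a]) [γ, δ] :=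
      rotationSum_of_isRotated
        (by simpa using isRotated_append (l := y ++ [b, a]) (l' := x ++ [b, a])) _
    have key₁ := rotationSum_append_pair_sub (y ++ [b, a] ++ x) a b γ δ
    have key₂ := rotationSum_append_pair_sub (x ++ [b, a] ++ y) a b γ δ
    rw [subwordCount_enclose_sub_eq_of_perm hz, hz.length_eq, ← key₂, h₂] at key₁
    rw [h₁]
    omega

theorem stmt_15_general (α β : Fin 3) (x y : List (Fin 3)) :
    ∀ u : List (Fin 3), u.length ≤ 2 → (∀ γ : Fin 3, u.count γ ≤ 1) →
      circCount (x ++ [α, β] ++ y ++ [β, α]) u =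
        circCount (x ++ [β, α] ++ y ++ [α, β]) u := by
  intro u hu _
  rw [circCount_eq_rotationSum_div (by simp), circCount_eq_rotationSum_div (by simp),
    rotationSum_swap_pairs x y α β hu]
  simp

/-- Lemma 32: if `w = xαβyβα` and `w' = xβαyαβ` for distinct letters `α, β` of
`{a, b, c} = Fin 3`, then `|[w]|_u = |[w']|_u` for every slender Parikh word `u`
of length at most 2. -/
theorem stmt_15 (α β : Fin 3) (hαβ : α ≠ β) (x y : List (Fin 3)) :
    ∀ u : List (Fin 3), u.length ≤ 2 → (∀ γ : Fin 3, u.count γ ≤ 1) →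
      circCount (x ++ [α, β] ++ y ++ [β, α]) u =
        circCount (x ++ [β, α] ++ y ++ [α, β]) u :=
  stmt_15_general α β x y
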